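/- arXiv:2107.04666 — 2 statements merged into one kernel-verified Lean document; each statement's English description precedes it below -/
import Mathlib

section
/- If a finite nonempty set X of positive integers is refinable (i.e., there exist x ∈ X and a finite set Y of positive integers disjoint from X with |Y| ≥ 2 and ∑Y = x), then there exist x ∈ X and a two-element set {y, z} of positive integers with y, z ∉ X, y ≠ z, and y + z = x. -/
def Refinable (X : Finset ℕ) : Prop :=
  ∃ x ∈ X, ∃ Y : Finset ℕ, (∀ y ∈ Y, 0 < y) ∧ Disjoint Y X ∧ 2 ≤ Y.card ∧ Y.sum id = x

noncomputable def mex (X : Finset ℕ) : ℕ := sInf {k : ℕ | 0 < k ∧ k ∉ X}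

theorem aux_refine : ∀ n (X Y : Finset ℕ) (x : ℕ), Y.card ≤ n → x ∈ X →
    (∀ y ∈ Y, 0 < y) → Disjoint Y X → 2 ≤ Y.card → Y.sum id = x →
    ∃ x ∈ X, ∃ y z : ℕ, 0 < y ∧ 0 < z ∧ y ∉ X ∧ z ∉ X ∧ y ≠ z ∧ y + z = x := by
  intro n
  induction n with
  | zero => intro X Y x hn _ _ _ h2 _; omega
  | succ n ih =>
    intro X Y x hn hx hpos hdisj h2 hsum
    rcases eq_or_lt_of_le h2 with h | h3
    · obtain ⟨y, z, hyz, rfl⟩ := Finset.card_eq_two.mp h.symm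
      have hy : y ∈ ({y, z} : Finset ℕ) := by simp
      have hz : z ∈ ({y, z} : Finset ℕ) := by simp
      refine ⟨x, hx, y, z, hpos y hy, hpos z hz,
        Finset.disjoint_left.mp hdisj hy, Finset.disjoint_left.mp hdisj hz, hyz, ?_⟩
      rw [← hsum, Finset.sum_pair hyz]; rfl
    · have hne : Y.Nonempty := Finset.card_pos.mp (by omega)
      set c := Y.max' hne with hcdef
      have hc : c ∈ Y := Y.max'_mem hne
      have hne' : (Y.erase c).Nonempty :=
        Finset.card_pos.mp (by rw [Finset.card_erase_of_mem hc]; omega)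
      set d := (Y.erase c).max' hne' with hddef
      have hd' : d ∈ Y.erase c := Finset.max'_mem _ hne'
      have hd : d ∈ Y := Finset.mem_of_mem_erase hd'
      have hdc : d ≠ c := Finset.ne_of_mem_erase hd'
      have hdpos : 0 < d := hpos d hd
      have hcpos : 0 < c := hpos c hc
      have hcd_notY : c + d ∉ Y := fun hmem => absurd (Y.le_max' _ hmem) (by omega)
      by_cases hcdX : c + d ∈ X
      · exact ⟨c + d, hcdX, c, d, hcpos, hdpos, Finset.disjoint_left.mp hdisj hc,
          Finset.disjoint_left.mp hdisj hd, hdc.symm, rfl⟩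
      · set E := (Y.erase c).erase d with hEdef
        have hcdE : c + d ∉ E := fun hE =>
          hcd_notY (Finset.mem_of_mem_erase (Finset.mem_of_mem_erase hE))
        set Y' := insert (c + d) E with hY'def
        have hsum' : Y'.sum id = x := by
          rw [hY'def, Finset.sum_insert hcdE]
          have h1 : id d + E.sum id = (Y.erase c).sum id := Finset.add_sum_erase _ id hd'
          have h2 : id c + (Y.erase c).sum id = Y.sum id := Finset.add_sum_erase _ id hc
          simp only [Function.id_def, id_eq] at h1 h2 hsum ⊢
          omega
        have hcard : Y'.card = Y.card - 1 := by
          rw [hY'def, Finset.card_insert_of_notMem hcdE, hEdef,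
            Finset.card_erase_of_mem hd', Finset.card_erase_of_mem hc]
          omega
        refine ih X Y' x (by omega) hx ?_ ?_ (by omega) hsum'
        · intro y hy
          rcases Finset.mem_insert.mp hy with rfl | hyE
          · omega
          · exact hpos y (Finset.mem_of_mem_erase (Finset.mem_of_mem_erase hyE))
        · rw [Finset.disjoint_left]
          intro a ha
          rcases Finset.mem_insert.mp ha with rfl | haE
          · exact hcdX
          · exact Finset.disjoint_left.mp hdisj
              (Finset.mem_of_mem_erase (Finset.mem_of_mem_erase haE))

theorem stmt0 (X : Finset ℕ) (hpos : ∀ x ∈ X, 0 < x) (hne : X.Nonempty)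
    (href : Refinable X) :
    ∃ x ∈ X, ∃ y z : ℕ, 0 < y ∧ 0 < z ∧ y ∉ X ∧ z ∉ X ∧ y ≠ z ∧ y + z = x := by
  obtain ⟨x, hx, Y, hYpos, hdisj, hcard, hsum⟩ := href
  exact aux_refine Y.card X Y x le_rfl hx hYpos hdisj hcard hsum
end

section
/- For n ≥ 3, every unrefinable set X ⊆ {1, ..., a−1} with ∑X = a + 1 and a ≤ n < a + mex(X) satisfies a > n − 1 − 2√n. -/
theorem stmt17 (n : ℕ) (hn : 3 ≤ n) (a : ℕ) (X : Finset ℕ)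
    (hX : X ⊆ Finset.Ioo 0 a) (hunref : ¬ Refinable X) (hsum : X.sum id = a + 1)
    (h1 : a ≤ n) (h2 : n < a + mex X) :
    (n : ℝ) - 1 - 2 * Real.sqrt n < a := by
  set m := mex X with hm
  -- every k with 0 < k < m is in X
  have hmem : ∀ k, 0 < k → k < m → k ∈ X := by
    intro k hk hkm
    by_contra hkX
    have : m ≤ k := Nat.sInf_le ⟨hk, hkX⟩
    omega
  set d := n - a with hd
  have hdm : d + 1 ≤ m := by omega
  have hsub : Finset.Ioo 0 (d + 1) ⊆ X := by
    intro k hk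
    simp only [Finset.mem_Ioo] at hk
    exact hmem k hk.1 (by omega)
  have hle : (Finset.Ioo 0 (d + 1)).sum id ≤ X.sum id :=
    Finset.sum_le_sum_of_subset hsub
  have hval : 2 * (Finset.Ioo 0 (d + 1)).sum id = d * (d + 1) := by
    have heq : (Finset.Ioo 0 (d + 1)).sum id = (Finset.range (d + 1)).sum id := by
      apply Finset.sum_subset
      · intro k hk; simp only [Finset.mem_Ioo] at hk; simp [hk.2]
      · intro k hk hk'; simp only [Finset.mem_Ioo, Finset.mem_range] at hk hk'
        simp only [id_eq]; omega
    rw [heq]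
    have h := Finset.sum_range_id_mul_two (d + 1)
    have h2 : (Finset.range (d + 1)).sum id = ∑ i ∈ Finset.range (d + 1), i := rfl
    simp only [Nat.add_sub_cancel] at h
    rw [mul_comm d (d + 1)]
    omega
  have hkey : d * (d + 1) ≤ 2 * (a + 1) := by
    rw [hsum] at hle
    omega
  -- pass to reals
  by_contra hcon
  push_neg at hcon
  have hs : Real.sqrt n ^ 2 = n := Real.sq_sqrt (Nat.cast_nonneg n)
  have hs0 : (0:ℝ) ≤ Real.sqrt n := Real.sqrt_nonneg n
  have hdr : (d : ℝ) = (n : ℝ) - a := by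
    rw [hd, Nat.cast_sub h1]
  have hkeyr : (d : ℝ) * (d + 1) ≤ 2 * (a + 1) := by exact_mod_cast hkey
  have han : (a : ℝ) ≤ n := by exact_mod_cast h1
  have hn3 : (3 : ℝ) ≤ n := by exact_mod_cast hn
  nlinarith [sq_nonneg (Real.sqrt n - 1), sq_nonneg ((d:ℝ) - 1 - 2 * Real.sqrt n)]
end
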